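/- For all α, β, γ ∈ (0, π) with α + β + γ < π, the quantity (cos α · cos β + cos γ)/(sin α · sin β) is strictly greater than 1; hence there exists a unique C > 0 with cosh C = (cos α cos β + cos γ)/(sin α sin β). -/
import Mathlib

/-- Hyperbolic law of cosines for angles: for α, β, γ ∈ (0, π) with α + β + γ < π,
(cos α cos β + cos γ)/(sin α sin β) > 1, so there is a unique side C > 0 with
cosh C equal to it. -/
theorem triangle_relation (α β γ : ℝ)
    (hα0 : 0 < α) (hαπ : α < Real.pi)
    (hβ0 : 0 < β) (hβπ : β < Real.pi)
    (hγ0 : 0 < γ) (hγπ : γ < Real.pi)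
    (hsum : α + β + γ < Real.pi) :
    1 < (Real.cos α * Real.cos β + Real.cos γ) / (Real.sin α * Real.sin β) ∧
    ∃! C : ℝ, 0 < C ∧
      Real.cosh C =
        (Real.cos α * Real.cos β + Real.cos γ) / (Real.sin α * Real.sin β) := by
  have hsa : 0 < Real.sin α := Real.sin_pos_of_pos_of_lt_pi hα0 hαπ
  have hsb : 0 < Real.sin β := Real.sin_pos_of_pos_of_lt_pi hβ0 hβπ
  have hγlt : γ < Real.pi - (α + β) := by linarith
  have hcos : Real.cos (Real.pi - (α + β)) < Real.cos γ := by
    apply Real.cos_lt_cos_of_nonneg_of_le_pi (le_of_lt hγ0) (by linarith) hγlt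
  rw [Real.cos_pi_sub, Real.cos_add] at hcos
  have key : Real.sin α * Real.sin β < Real.cos α * Real.cos β + Real.cos γ := by
    linarith
  have h1 : 1 < (Real.cos α * Real.cos β + Real.cos γ) / (Real.sin α * Real.sin β) :=
    (one_lt_div (mul_pos hsa hsb)).2 key
  refine ⟨h1, ?_⟩
  set v := (Real.cos α * Real.cos β + Real.cos γ) / (Real.sin α * Real.sin β) with hv
  have hvle : v ≤ Real.cosh (2 * v) := by
    have h2 : Real.exp (2 * v) / 2 ≤ Real.cosh (2 * v) := by
      rw [Real.cosh_eq]
      have := Real.exp_pos (-(2 * v))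
      linarith
    have h3 : 2 * v + 1 ≤ Real.exp (2 * v) := Real.add_one_le_exp (2 * v)
    linarith
  have hcont : ContinuousOn Real.cosh (Set.Icc 0 (2 * v)) :=
    Real.continuous_cosh.continuousOn
  have hiv : v ∈ Set.Icc (Real.cosh 0) (Real.cosh (2 * v)) := by
    rw [Real.cosh_zero]; exact ⟨le_of_lt h1, hvle⟩
  obtain ⟨C, hCmem, hC⟩ := intermediate_value_Icc (by linarith : (0:ℝ) ≤ 2 * v) hcont hiv
  have hCpos : 0 < C := by
    rcases lt_or_eq_of_le hCmem.1 with h | h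
    · exact h
    · exfalso; rw [← h, Real.cosh_zero] at hC; linarith
  refine ⟨C, ⟨hCpos, hC⟩, ?_⟩
  rintro D ⟨hD0, hDv⟩
  exact Real.cosh_strictMonoOn.injOn (le_of_lt hD0) (le_of_lt hCpos) (by rw [hDv, hC])
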